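/- arXiv:2308.13258 — 2 statements merged into one kernel-verified Lean document; each statement's English description precedes it below -/
import Mathlib

section
/- Moyal product of Fourier modes: for f, g ∈ ℂ[[x,ε,μ]] and a, b ∈ ℤ, one has (f e^{iay}) * (g e^{iby}) = (e^{−(b/2)εμ∂_x} f) · (e^{(a/2)εμ∂_x} g) · e^{i(a+b)y}, where e^{cεμ∂_x} := Σ_{k≥0} (cεμ)^k ∂_x^k / k! for c ∈ ℂ. -/
/-! The ring `B := ℂ[[x, ε, μ]]` (variable `0` is `x`, variable `1` is `ε`, variable `2`
is `μ`), formal Fourier modes `f·e^{iay}` on which `∂_x` acts as `d/dx` and `∂_y` acts as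
multiplication by `ia`, and the Moyal star-product on such modes. A formal Fourier series
`Σ_{a∈ℤ} f^a e^{iay}` is encoded as the function `ℤ → B`, `a ↦ f^a`. -/

/-- The ring `B := ℂ[[x, ε, μ]]`. -/
abbrev Bxem : Type := MvPowerSeries (Fin 3) ℂ

/-- The derivation `∂_x = d/dx` on `B = ℂ[[x,ε,μ]]`. -/
noncomputable def dB (f : Bxem) : Bxem := fun m =>
  ((m 0 + 1 : ℕ) : ℂ) * f (m + Finsupp.single 0 1)

/-- Moyal star-product of two Fourier modes: the coefficient (in `B`) of `e^{i(a+b)y}` in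
`(f e^{iay}) * (g e^{iby})`.  It is given by the sum
`Σ_{k₁,k₂≥0} ((−1)^{k₂} i^{k₁+k₂} (ia)^{k₂} (ib)^{k₁} / (2^{k₁+k₂} k₁! k₂!))
(εμ)^{k₁+k₂} (∂_x^{k₁} f)(∂_x^{k₂} g)`, where `∂_y` has been evaluated as `ia` resp. `ib`
on the two modes.  It is defined coefficientwise: the `(k₁,k₂)`-summand is divisible by
`(εμ)^{k₁+k₂}`, so its coefficient at a monomial `m` vanishes unless `k₁+k₂ ≤ m(ε)`. -/
noncomputable def moyalMode (f g : Bxem) (a b : ℤ) : Bxem := fun m =>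
  ∑ p ∈ Finset.range (m 1 + 1) ×ˢ Finset.range (m 1 + 1),
    ((((-1 : ℂ) ^ p.2 * Complex.I ^ (p.1 + p.2) * (Complex.I * (a : ℂ)) ^ p.2 *
        (Complex.I * (b : ℂ)) ^ p.1) / (2 ^ (p.1 + p.2) * p.1.factorial * p.2.factorial)) •
      ((MvPowerSeries.X 1 * MvPowerSeries.X 2 : Bxem) ^ (p.1 + p.2) *
        (dB^[p.1] f) * (dB^[p.2] g))) m

/-- The Moyal star-product of two formal Fourier series `F = Σ F^a e^{iay}` and
`G = Σ G^a e^{iay}`: the mode-`a` coefficient is `Σ_{a₁+a₂=a} (F^{a₁}e^{ia₁y})*(G^{a₂}e^{ia₂y})`,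
the (coefficientwise) sum being taken over all pairs `(a₁,a₂)` with `a₁+a₂=a`. -/
noncomputable def fstar (F G : ℤ → Bxem) : ℤ → Bxem := fun a => fun m =>
  ∑' p : {p : ℤ × ℤ // p.1 + p.2 = a}, moyalMode (F p.1.1) (G p.1.2) p.1.1 p.1.2 m

/-- The operator `e^{cεμ∂_x} := Σ_{k≥0} (cεμ)^k ∂_x^k / k!` on `B`, defined
coefficientwise (the `k`-th summand is divisible by `ε^k`). -/
noncomputable def expOp (c : ℂ) (f : Bxem) : Bxem := fun m =>
  ∑ k ∈ Finset.range (m 1 + 1),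
    ((c ^ k / k.factorial) • ((MvPowerSeries.X 1 * MvPowerSeries.X 2 : Bxem) ^ k * dB^[k] f)) m

/-- The single Fourier mode `f e^{iay}`, as a formal Fourier series. -/
noncomputable def fsingle (a : ℤ) (f : Bxem) : ℤ → Bxem := fun c =>
  if c = a then f else 0

/-!
The weight of the `(k₁,k₂)`-summand of the Moyal product of `f e^{iay}` and `g e^{iby}` factors
as `((-b/2)^k₁/k₁!) · ((a/2)^k₂/k₂!)`, so the double sum is the product of two truncated
exponential series. Since the `k`-th term of `e^{cεμ∂_x}` is divisible by `ε^k`, truncating at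
any order beyond the `ε`-degree of a monomial does not change its coefficient, and coefficients
of a product only involve smaller monomials. In the Fourier sum over `a₁ + a₂ = a + b` only the
pair `(a, b)` contributes.
-/

namespace MvPowerSeries

variable {σ R : Type*} [CommSemiring R]

theorem coeff_X_pow_mul_of_lt (i : σ) {k : ℕ} (φ : MvPowerSeries σ R) {m : σ →₀ ℕ}
    (hm : m i < k) : coeff m (X i ^ k * φ) = 0 := by
  rw [X_pow_eq, coeff_monomial_mul, if_neg]
  intro hle
  have := hle i
  simp only [Finsupp.single_eq_same] at this
  omega

theorem coeff_mul_congr {φ φ' ψ ψ' : MvPowerSeries σ R} {m : σ →₀ ℕ}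
    (hφ : ∀ n ≤ m, coeff n φ = coeff n φ') (hψ : ∀ n ≤ m, coeff n ψ = coeff n ψ') :
    coeff m (φ * ψ) = coeff m (φ' * ψ') := by
  classical
  rw [coeff_mul, coeff_mul]
  refine Finset.sum_congr rfl fun p hp => ?_
  rw [Finset.HasAntidiagonal.mem_antidiagonal] at hp
  rw [hφ p.1 (hp ▸ le_self_add), hψ p.2 (hp ▸ le_add_self)]

end MvPowerSeries

open MvPowerSeries Finset

theorem dB_zero : dB 0 = 0 := funext fun _ => mul_zero _

noncomputable def expTrunc (c : ℂ) (N : ℕ) (f : Bxem) : Bxem :=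
  ∑ k ∈ range N, (c ^ k / k.factorial) • ((X 1 * X 2 : Bxem) ^ k * dB^[k] f)

theorem coeff_expOp (c : ℂ) (f : Bxem) (m : Fin 3 →₀ ℕ) :
    coeff m (expOp c f) = coeff m (expTrunc c (m 1 + 1) f) := by
  rw [expTrunc, map_sum]
  rfl

theorem coeff_expOp_eq_coeff_expTrunc (c : ℂ) (f : Bxem) {N : ℕ} {m : Fin 3 →₀ ℕ}
    (hN : m 1 < N) : coeff m (expOp c f) = coeff m (expTrunc c N f) := by
  rw [coeff_expOp, expTrunc, expTrunc, map_sum, map_sum]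
  refine sum_subset (range_subset_range.mpr hN) fun k _ hk => ?_
  rw [mem_range, not_lt] at hk
  rw [coeff_smul, mul_pow, mul_assoc, coeff_X_pow_mul_of_lt 1 _ (by omega), mul_zero]

theorem expTrunc_mul_expTrunc (c₁ c₂ : ℂ) (N : ℕ) (f g : Bxem) :
    expTrunc c₁ N f * expTrunc c₂ N g =
      ∑ p ∈ range N ×ˢ range N, (c₁ ^ p.1 / p.1.factorial * (c₂ ^ p.2 / p.2.factorial)) •
        ((X 1 * X 2 : Bxem) ^ (p.1 + p.2) * dB^[p.1] f * dB^[p.2] g) := by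
  rw [expTrunc, expTrunc, sum_mul_sum, ← sum_product']
  refine sum_congr rfl fun p _ => ?_
  rw [smul_mul_smul_comm, pow_add]
  congr 1
  ring

theorem moyal_weight_factor (a b : ℂ) (k₁ k₂ : ℕ) :
    (-1 : ℂ) ^ k₂ * Complex.I ^ (k₁ + k₂) * (Complex.I * a) ^ k₂ * (Complex.I * b) ^ k₁ /
        (2 ^ (k₁ + k₂) * k₁.factorial * k₂.factorial) =
      (-b / 2) ^ k₁ / k₁.factorial * ((a / 2) ^ k₂ / k₂.factorial) := by
  -- writing `-1 = i²`, the powers of `i` on the left combine to `(i⁴)^k₂ · (i²)^k₁`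
  rw [neg_div, neg_pow (b / 2), div_pow b, div_pow a, ← Complex.I_sq]
  calc _ = (Complex.I ^ 4) ^ k₂ * ((Complex.I ^ 2) ^ k₁ * (b ^ k₁ / 2 ^ k₁) / k₁.factorial *
        (a ^ k₂ / 2 ^ k₂ / k₂.factorial)) := by ring
    _ = _ := by rw [Complex.I_pow_four, one_pow, one_mul]

theorem moyalMode_eq_expOp_mul_expOp (f g : Bxem) (a b : ℤ) :
    moyalMode f g a b = expOp (-(b : ℂ) / 2) f * expOp ((a : ℂ) / 2) g := by
  ext m
  calc coeff m (moyalMode f g a b)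
      = coeff m (expTrunc (-(b : ℂ) / 2) (m 1 + 1) f * expTrunc ((a : ℂ) / 2) (m 1 + 1) g) := by
        rw [expTrunc_mul_expTrunc, map_sum]
        simp_rw [← moyal_weight_factor]
        rfl
    _ = coeff m (expOp (-(b : ℂ) / 2) f * expOp ((a : ℂ) / 2) g) := by
        have htrunc (c : ℂ) (φ : Bxem) (n : Fin 3 →₀ ℕ) (hn : n ≤ m) :
            coeff n (expTrunc c (m 1 + 1) φ) = coeff n (expOp c φ) :=
          (coeff_expOp_eq_coeff_expTrunc c φ (Nat.lt_succ_of_le (hn 1))).symm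
        exact coeff_mul_congr (htrunc _ f) (htrunc _ g)

theorem expOp_zero (c : ℂ) : expOp c 0 = 0 := by
  ext m
  simp [coeff_expOp, expTrunc, Function.iterate_fixed dB_zero]

theorem moyalMode_fsingle_fsingle (f g : Bxem) (a b a' b' : ℤ) :
    moyalMode (fsingle a f a') (fsingle b g b') a' b' =
      if (a', b') = (a, b) then moyalMode f g a b else 0 := by
  simp only [moyalMode_eq_expOp_mul_expOp, fsingle, Prod.mk.injEq]
  split_ifs <;> simp_all [expOp_zero]

theorem fstar_fsingle_fsingle (f g : Bxem) (a b : ℤ) :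
    fstar (fsingle a f) (fsingle b g) = fsingle (a + b) (moyalMode f g a b) := by
  funext c m
  change ∑' p : {p : ℤ × ℤ // p.1 + p.2 = c},
      coeff m (moyalMode (fsingle a f p.1.1) (fsingle b g p.1.2) p.1.1 p.1.2) =
    coeff m (fsingle (a + b) (moyalMode f g a b) c)
  simp_rw [moyalMode_fsingle_fsingle, apply_ite (coeff m), map_zero]
  by_cases hc : c = a + b
  · subst hc
    rw [tsum_eq_single (⟨(a, b), rfl⟩ : {p : ℤ × ℤ // p.1 + p.2 = a + b})
      fun p hp => if_neg fun h => hp (Subtype.ext h)]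
    simp [fsingle]
  · have hne (p : {p : ℤ × ℤ // p.1 + p.2 = c}) : (p.1.1, p.1.2) ≠ (a, b) := fun h =>
      hc (by rw [← p.2, show p.1 = (a, b) from h])
    simp [hne, fsingle, hc]

/-- Moyal product of Fourier modes: for `f, g ∈ ℂ[[x,ε,μ]]` and
`a, b ∈ ℤ` one has
`(f e^{iay}) * (g e^{iby}) = (e^{−(b/2)εμ∂_x} f) · (e^{(a/2)εμ∂_x} g) · e^{i(a+b)y}`. -/
theorem moyal_fourier_modes (f g : Bxem) (a b : ℤ) :
    fstar (fsingle a f) (fsingle b g) =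
      fsingle (a + b) (expOp (-(b : ℂ) / 2) f * expOp ((a : ℂ) / 2) g) := by
  rw [fstar_fsingle_fsingle, moyalMode_eq_expOp_mul_expOp]
end

section
/- Counting weightings mod r: let Γ be a connected graph with legs, let r ≥ 1, and let a₁,…,a_n ∈ ℤ be leg values with a₁ + ⋯ + a_n ≡ 0 (mod r). Then the number of weightings mod r of Γ equals r^{h¹(Γ)}, where h¹(Γ) := |E| − |V| + 1. -/
/-!
With values in any finite abelian group `A`, the weightings form a coset of the group of flows
(functions antisymmetric along edges and zero on legs) with zero boundary. The coset is nonempty: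
by connectedness the boundary map sends flows onto the vertex functions of total sum zero, and
since `∑ aᵢ = 0` this subgroup contains the boundary of the leg values extended by zero. A flow is
free on an orientation of the edges, so `|A| ^ |E| = |ker| * |A| ^ (|V| - 1)`.
-/

open Finset Function

theorem Nat.eq_pow_sub_of_mul_pow_eq {b m n k : ℕ} (hb : 0 < b) (h : k * b ^ m = b ^ n) :
    k = b ^ (n - m) := by
  obtain rfl | hb := (Nat.succ_le_of_lt hb).eq_or_lt
  · simpa using h
  have hmn : m ≤ n := (Nat.pow_dvd_pow_iff_le_right hb).1 ⟨k, by rw [← h, mul_comm]⟩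
  rw [← Nat.pow_sub_mul_pow b hmn] at h
  exact Nat.eq_of_mul_eq_mul_right (pow_pos (by omega) m) h

theorem AddSubgroup.card_inf_ker_mul_card_map {G G' : Type*} [AddGroup G] [AddGroup G']
    (S : AddSubgroup G) (f : G →+ G') :
    Nat.card ↥(S ⊓ f.ker) * Nat.card ↥(S.map f) = Nat.card S := by
  rw [← AddSubgroup.card_mul_index (f.domRestrict S).ker, AddSubgroup.index_ker,
    AddMonoidHom.domRestrict_range, AddMonoidHom.ker_domRestrict,
    ← AddSubgroup.inf_addSubgroupOf_left,
    Nat.card_congr (AddSubgroup.addSubgroupOfEquivOfLe inf_le_left).toEquiv, inf_comm]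

namespace GraphWithLegs

variable {V H A : Type*} [AddCommGroup A]

section TotalSum

variable (V A) [Fintype V]

def totalSum : (V → A) →+ A := ∑ u, Pi.evalAddMonoidHom (fun _ => A) u

variable {V A}

@[simp]
lemma totalSum_apply (f : V → A) : totalSum V A f = ∑ u, f u := by
  simp [totalSum]

lemma card_ker_totalSum_mul [Nonempty V] :
    Nat.card (totalSum V A).ker * Nat.card A = Nat.card A ^ Fintype.card V := by
  classical
  obtain ⟨u⟩ := ‹Nonempty V›
  have hsurj : Surjective (totalSum V A) := fun c => ⟨Pi.single u c, by simp⟩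
  calc Nat.card (totalSum V A).ker * Nat.card A
      = Nat.card (totalSum V A).ker * Nat.card (totalSum V A).range := by
        rw [AddMonoidHom.range_eq_top.2 hsurj, AddSubgroup.card_top]
    _ = Nat.card A ^ Fintype.card V := by
        rw [← AddSubgroup.index_ker, AddSubgroup.card_mul_index, Nat.card_fun,
          Nat.card_eq_fintype_card (α := V)]

end TotalSum

section Boundary

variable [Fintype H] [DecidableEq V]

def boundary (v : H → V) : (H → A) →+ (V → A) where
  toFun w u := ∑ h ∈ univ.filter fun h => v h = u, w h
  map_zero' := by ext; simp
  map_add' _ _ := by ext; simp [sum_add_distrib]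

lemma boundary_apply (v : H → V) (w : H → A) (u : V) :
    boundary v w u = ∑ h ∈ univ.filter fun h => v h = u, w h := rfl

lemma boundary_single [DecidableEq H] (v : H → V) (h : H) (c : A) :
    boundary v (Pi.single h c) = Pi.single (v h) c := by
  ext u
  simp [boundary_apply, Pi.single_apply, eq_comm]

lemma sum_boundary [Fintype V] (v : H → V) (w : H → A) : ∑ u, boundary v w u = ∑ h, w h :=
  sum_fiberwise univ v w

end Boundary

section Flows

variable {ι : H → H}

variable (ι) in
def flows : AddSubgroup (H → A) where
  carrier := {w | (∀ h, ι h ≠ h → w h + w (ι h) = 0) ∧ ∀ h, ι h = h → w h = 0}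
  zero_mem' := by simp
  add_mem' {w w'} hw hw' := by
    refine ⟨fun h hh => ?_, fun h hh => ?_⟩
    · rw [Pi.add_apply, Pi.add_apply, add_add_add_comm, hw.1 h hh, hw'.1 h hh, add_zero]
    · simp [hw.2 h hh, hw'.2 h hh]
  neg_mem' {w} hw := by
    refine ⟨fun h hh => ?_, fun h hh => ?_⟩
    · simp only [Pi.neg_apply, ← neg_add, hw.1 h hh, neg_zero]
    · simp [hw.2 h hh]

lemma sum_eq_zero_of_mem_flows [Fintype H] (hι : Involutive ι) {w : H → A} (hw : w ∈ flows ι) :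
    ∑ h, w h = 0 :=
  sum_involution (fun h _ => ι h)
    (fun h _ => by
      by_cases hh : ι h = h
      · rw [hh, hw.2 h hh, add_zero]
      · exact hw.1 h hh)
    (fun h _ hw0 hh => hw0 (hw.2 h hh)) (fun _ _ => mem_univ _) (fun h _ => hι h)

lemma sub_comp_mem_flows (hι : Involutive ι) (g : H → A) : g - g ∘ ι ∈ flows ι := by
  refine ⟨fun h _ => ?_, fun h hh => ?_⟩
  · simp only [Pi.sub_apply, comp_apply, hι h, sub_add_sub_cancel, sub_self]
  · simp [hh]

lemma single_sub_single_mem_flows [DecidableEq H] (hι : Involutive ι) (h : H) (c : A) :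
    Pi.single h c - Pi.single (ι h) c ∈ flows (A := A) ι := by
  have hcomp : Pi.single h c ∘ ι = Pi.single (ι h) c := by
    ext g
    simp [Pi.single_apply, hι.eq_iff]
  simpa [hcomp] using sub_comp_mem_flows hι (Pi.single h c)

variable [Fintype H] [LinearOrder H]

def flowsEquivFun (hι : Involutive ι) : flows (A := A) ι ≃ ({h // h < ι h} → A) where
  toFun w e := w.1 e.1
  invFun f := ⟨_, sub_comp_mem_flows hι fun h => if hlt : h < ι h then f ⟨h, hlt⟩ else 0⟩
  left_inv w := by
    obtain ⟨w, hanti, hfix⟩ := w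
    ext h
    rcases lt_trichotomy h (ι h) with hlt | heq | hgt
    · have : ¬ ι h < ι (ι h) := by rw [hι]; exact hlt.not_gt
      simp [hlt, this]
    · simp [← heq, hfix h heq.symm]
    · have : ι h < ι (ι h) := by rwa [hι]
      simp only [Pi.sub_apply, comp_apply, dif_neg hgt.not_gt, dif_pos this, zero_sub]
      exact neg_eq_of_add_eq_zero_left (hanti h hgt.ne)
  right_inv f := by
    ext e
    have : ¬ ι e.1 < ι (ι e.1) := by rw [hι]; exact e.2.not_gt
    simp [e.2, this]

lemma card_filter_ne_eq_two_mul (hι : Involutive ι) :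
    #{h | ι h ≠ h} = 2 * #{h | h < ι h} := by
  have hgt : #{h | ι h < h} = #{h | h < ι h} :=
    card_nbij' ι ι (fun h hh => by simpa [hι h] using hh) (fun h hh => by simpa [hι h] using hh)
      (fun h _ => hι h) (fun h _ => hι h)
  rw [filter_congr (fun h _ => ne_iff_lt_or_gt), filter_or, card_union_of_disjoint, hgt, two_mul]
  exact disjoint_filter.2 fun h _ hlt hgt => lt_asymm hlt hgt

end Flows

lemma card_flows [Fintype H] [DecidableEq H] {ι : H → H} (hι : Involutive ι) :
    Nat.card (flows (A := A) ι) = Nat.card A ^ (#{h | ι h ≠ h} / 2) := by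
  let : LinearOrder H := LinearOrder.lift' _ (Fintype.equivFin H).injective
  rw [Nat.card_congr (flowsEquivFun hι), Nat.card_fun, Nat.card_eq_fintype_card (α := {h // _}),
    Fintype.card_subtype, ← Nat.mul_div_cancel_left #{h | h < ι h} two_pos,
    ← card_filter_ne_eq_two_mul hι]
  -- the two filters differ only in their decidability instances
  convert rfl

def underlyingGraph (v : H → V) (ι : H → H) : SimpleGraph V :=
  SimpleGraph.fromRel fun u u' => ∃ h, v h = u ∧ v (ι h) = u'

section Connected

variable [Fintype H] [DecidableEq V] [DecidableEq H] {v : H → V} {ι : H → H}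

lemma single_sub_single_mem_map_boundary_of_adj (hι : Involutive ι) {u u' : V}
    (hadj : (underlyingGraph v ι).Adj u u') (c : A) :
    (Pi.single u c - Pi.single u' c : V → A) ∈ (flows ι).map (boundary v) := by
  obtain ⟨-, ⟨h, rfl, rfl⟩ | ⟨h, rfl, rfl⟩⟩ := hadj
  · exact ⟨_, single_sub_single_mem_flows hι h c, by simp [boundary_single]⟩
  · exact ⟨_, single_sub_single_mem_flows hι (ι h) c, by simp [boundary_single, hι h]⟩

lemma single_sub_single_mem_map_boundary (hι : Involutive ι)
    (hconn : (underlyingGraph v ι).Connected) (u u' : V) (c : A) :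
    (Pi.single u c - Pi.single u' c : V → A) ∈ (flows ι).map (boundary v) := by
  obtain ⟨p⟩ := hconn.preconnected u u'
  induction p with
  | nil => simp
  | cons hadj _ ih =>
    simpa using add_mem (single_sub_single_mem_map_boundary_of_adj hι hadj c) ih

lemma map_boundary_flows [Fintype V] (hι : Involutive ι)
    (hconn : (underlyingGraph v ι).Connected) :
    (flows ι).map (boundary v) = (totalSum V A).ker := by
  refine le_antisymm ?_ fun f hf => ?_
  · rintro _ ⟨w, hw, rfl⟩
    simp [sum_boundary, sum_eq_zero_of_mem_flows hι hw]
  · obtain ⟨u₀⟩ := hconn.nonempty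
    have hf : ∑ u, f u = 0 := by simpa using hf
    have hsingle : ∑ u, Pi.single u₀ (f u) = (0 : V → A) :=
      calc ∑ u, Pi.single u₀ (f u) = (Pi.single u₀ (∑ u, f u) : V → A) :=
            (map_sum (AddMonoidHom.single (fun _ => A) u₀) f univ).symm
        _ = 0 := by rw [hf, Pi.single_zero]
    have hdecomp : f = ∑ u, (Pi.single u (f u) - Pi.single u₀ (f u)) := by
      rw [sum_sub_distrib, univ_sum_single, hsingle, sub_zero]
    rw [hdecomp]
    exact sum_mem fun u _ => single_sub_single_mem_map_boundary hι hconn u u₀ (f u)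

lemma card_flows_inf_ker_boundary [Fintype V] [Finite A] (hι : Involutive ι)
    (hconn : (underlyingGraph v ι).Connected) :
    Nat.card ↥(flows ι ⊓ (boundary (A := A) v).ker) =
      Nat.card A ^ (#{h | ι h ≠ h} / 2 + 1 - Fintype.card V) := by
  have : Nonempty V := hconn.nonempty
  have hA : 0 < Nat.card A := Nat.card_pos
  refine Nat.eq_pow_sub_of_mul_pow_eq hA ?_
  rw [← card_ker_totalSum_mul, ← mul_assoc, ← map_boundary_flows hι hconn,
    AddSubgroup.card_inf_ker_mul_card_map, card_flows hι, pow_succ]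

end Connected

section Weightings

variable [Fintype H] [DecidableEq V] {v : H → V} {ι : H → H} {n : ℕ} {l : Fin n → H}
  {a : Fin n → A}

def IsWeighting (v : H → V) (ι : H → H) (l : Fin n → H) (a : Fin n → A) (w : H → A) : Prop :=
  (∀ i, w (l i) = a i) ∧ (∀ h, ι h ≠ h → w h + w (ι h) = 0) ∧
    ∀ u, ∑ h ∈ univ.filter fun h => v h = u, w h = 0

lemma isWeighting_iff_sub_mem (hlegs : ∀ h, ι h = h ↔ ∃ i, l i = h) {w₀ : H → A}
    (hw₀ : IsWeighting v ι l a w₀) (w : H → A) :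
    IsWeighting v ι l a w ↔ w - w₀ ∈ flows ι ⊓ (boundary v).ker := by
  obtain ⟨hleg₀, hanti₀, hbdry₀⟩ := hw₀
  simp only [AddSubgroup.mem_inf, AddMonoidHom.mem_ker, map_sub, sub_eq_zero]
  constructor
  · rintro ⟨hleg, hanti, hbdry⟩
    refine ⟨⟨fun h hh => ?_, fun h hh => ?_⟩, ?_⟩
    · rw [Pi.sub_apply, Pi.sub_apply, sub_add_sub_comm, hanti h hh, hanti₀ h hh, sub_self]
    · obtain ⟨i, rfl⟩ := (hlegs h).1 hh
      rw [Pi.sub_apply, hleg, hleg₀, sub_self]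
    · ext u
      rw [boundary_apply, boundary_apply, hbdry, hbdry₀]
  · rintro ⟨⟨hanti, hfix⟩, hbdry⟩
    refine ⟨fun i => ?_, fun h hh => ?_, fun u => ?_⟩
    · rw [← hleg₀, ← sub_eq_zero]
      exact hfix (l i) ((hlegs _).2 ⟨i, rfl⟩)
    · simpa [sub_add_sub_comm, hanti₀ h hh] using hanti h hh
    · rw [← boundary_apply, hbdry, boundary_apply, hbdry₀]

lemma exists_isWeighting [DecidableEq H] [Fintype V] (hι : Involutive ι)
    (hconn : (underlyingGraph v ι).Connected) (hlinj : Injective l)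
    (hlegs : ∀ h, ι h = h ↔ ∃ i, l i = h) (ha : ∑ i, a i = 0) :
    ∃ w₀, IsWeighting v ι l a w₀ := by
  set g : H → A := extend l a 0
  have hg_leg (i : Fin n) : g (l i) = a i := hlinj.extend_apply a 0 i
  have hg_edge {h : H} (hh : ι h ≠ h) : g h = 0 :=
    extend_apply' _ _ _ fun ⟨i, hi⟩ => hh ((hlegs h).2 ⟨i, hi⟩)
  have hg_sum : ∑ h, g h = 0 :=
    (Fintype.sum_of_injective l hlinj a g (fun h hh => extend_apply' _ _ _ hh)
      fun i => (hg_leg i).symm).symm.trans ha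
  obtain ⟨f, hf, hfg⟩ : -boundary v g ∈ (flows ι).map (boundary v) := by
    rw [map_boundary_flows hι hconn]
    simp [sum_boundary, hg_sum]
  have hbdry : boundary v (f + g) = 0 := by rw [map_add, hfg, neg_add_cancel]
  refine ⟨f + g, fun i => ?_, fun h hh => ?_, fun u => congrFun hbdry u⟩
  · rw [Pi.add_apply, hf.2 (l i) ((hlegs _).2 ⟨i, rfl⟩), hg_leg, zero_add]
  · have hιh : ι (ι h) ≠ ι h := by rw [hι h]; exact hh.symm
    rw [Pi.add_apply, Pi.add_apply, hg_edge hh, hg_edge hιh, add_zero, add_zero, hf.1 h hh]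

theorem card_isWeighting [DecidableEq H] [Fintype V] [Finite A] (hι : Involutive ι)
    (hconn : (underlyingGraph v ι).Connected) (hlinj : Injective l)
    (hlegs : ∀ h, ι h = h ↔ ∃ i, l i = h) (ha : ∑ i, a i = 0) :
    Nat.card {w // IsWeighting v ι l a w} =
      Nat.card A ^ (#{h | ι h ≠ h} / 2 + 1 - Fintype.card V) := by
  obtain ⟨w₀, hw₀⟩ := exists_isWeighting hι hconn hlinj hlegs ha
  rw [← card_flows_inf_ker_boundary hι hconn]
  exact Nat.card_congr <| (Equiv.subRight w₀).subtypeEquiv (isWeighting_iff_sub_mem hlegs hw₀)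

end Weightings

end GraphWithLegs

open GraphWithLegs

/-- Counting weightings mod `r`.  A graph with legs is given by a finite
set of vertices `V`, a finite set of half-edges `H` with a vertex assignment `v : H → V`
and an involution `ι : H → H`; the edges are the `2`-element orbits of `ι` (so the number
of edges is half the number of non-fixed half-edges) and the legs are the fixed points of
`ι`, enumerated as `l 0, …, l (n-1)`.  The graph obtained by joining `v h` and `v (ι h)`
for every edge is required to be connected.  Given `r ≥ 1` and leg values
`a₁,…,a_n ∈ ℤ` with `a₁ + ⋯ + a_n ≡ 0 (mod r)`, a weighting mod `r` is a function
`w : H → ℤ/rℤ` with `w(lᵢ) = aᵢ`, `w(h) + w(ι h) = 0` for every edge `{h, ι h}`, and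
`Σ_{h : v(h)=u} w(h) = 0` for every vertex `u`.  Then the number of weightings mod `r`
equals `r^{h¹(Γ)}`, where `h¹(Γ) = |E| − |V| + 1`. -/
theorem count_weightings_mod_r (V H : Type) [Fintype V] [Fintype H]
    [DecidableEq V] [DecidableEq H]
    (v : H → V) (ι : H → H) (hι : Function.Involutive ι)
    (hconn : (SimpleGraph.fromRel fun u u' : V => ∃ h : H, v h = u ∧ v (ι h) = u').Connected)
    (n : ℕ) (l : Fin n → H) (hlinj : Function.Injective l)
    (hlegs : ∀ h : H, ι h = h ↔ ∃ i : Fin n, l i = h)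
    (r : ℕ) (hr : 1 ≤ r) (a : Fin n → ℤ) (ha : ∑ i : Fin n, (a i : ZMod r) = 0) :
    Nat.card {w : H → ZMod r //
        (∀ i : Fin n, w (l i) = (a i : ZMod r)) ∧
        (∀ h : H, ι h ≠ h → w h + w (ι h) = 0) ∧
        (∀ u : V, ∑ h ∈ Finset.univ.filter fun h => v h = u, w h = 0)} =
      r ^ ((Finset.univ.filter fun h : H => ι h ≠ h).card / 2 + 1 - Fintype.card V) := by
  have : NeZero r := ⟨by omega⟩
  exact (card_isWeighting hι hconn hlinj hlegs ha).trans (by rw [Nat.card_zmod])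
end
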